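/- Let N and H be finitely generated groups with property FW. Then any semidirect product N ⋊ H is finitely generated and has property FW. -/

import Mathlib

open scoped Classical in
/-- The number of ends of a graph: the supremum over finite vertex sets `K` of the
number of infinite connected components of the induced subgraph on the complement of `K`. -/
noncomputable def numEnds {V : Type*} (Γ : SimpleGraph V) : ℕ∞ :=
  ⨆ K : Finset V,
    {C : (SimpleGraph.induce ((↑K : Set V)ᶜ) Γ).ConnectedComponent | C.supp.Infinite}.encard

/-- The orbital graph of an action of `G` on `X` with respect to `S ⊆ G`:
vertices `X`, an edge between `x` and `s • x` for each `s ∈ S`. -/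
def orbitalGraph (G : Type*) [Group G] (S : Set G) (X : Type*) [MulAction G X] :
    SimpleGraph X where
  Adj x y := x ≠ y ∧ ∃ s ∈ S, (s • x = y ∨ s • y = x)
  symm := by
    constructor
    rintro x y ⟨h, s, hs, h'⟩
    exact ⟨h.symm, s, hs, h'.symm⟩
  loopless := by constructor; rintro x ⟨h, -⟩; exact h rfl

/-- The Schreier graph `Sch(G, H; S)`: vertices the left cosets `G ⧸ H`,
an edge between `gH` and `sgH` for each `s ∈ S`. -/
def schreierGraph (G : Type*) [Group G] (S : Set G) (H : Subgroup G) :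
    SimpleGraph (G ⧸ H) where
  Adj x y := x ≠ y ∧ ∃ s ∈ S, ∃ g : G,
      (((g : G ⧸ H) = x ∧ ((s * g : G) : G ⧸ H) = y)) ∨
      (((g : G ⧸ H) = y ∧ ((s * g : G) : G ⧸ H) = x))
  symm := by
    constructor
    rintro x y ⟨h, s, hs, g, hg⟩
    exact ⟨h.symm, s, hs, g, hg.symm⟩
  loopless := by constructor; rintro x ⟨h, -⟩; exact h rfl

/-- The Cayley graph of `G` with respect to `S`. -/
def cayleyGraph (G : Type*) [Group G] (S : Set G) : SimpleGraph G :=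
  orbitalGraph G S G

/-- `S` is a finite symmetric generating set of `G`. -/
def IsSymmGen {G : Type*} [Group G] (S : Finset G) : Prop :=
  (∀ s ∈ S, s⁻¹ ∈ S) ∧ Subgroup.closure (S : Set G) = ⊤

/-- A group has property FW if all of its Schreier graphs with respect to a finite
symmetric generating set have at most one end. -/
def HasFW (G : Type*) [Group G] : Prop :=
  ∀ S : Finset G, IsSymmGen S → ∀ L : Subgroup G, numEnds (schreierGraph G (↑S) L) ≤ 1

/-! For a finitely generated group `G`, the Schreier graphs of `G` have at most one end exactly
when every commensurated subset `M` of a coset space `G ⧸ L` (one with `M ∆ g • M` finite for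
all `g`) is finite or cofinite: outside the finite set `⋃ s, M ∆ s • M` no edge joins `M` to
`Mᶜ`, and conversely an infinite component of the complement of a finite set is commensurated.

For an extension `N → G → H` and a commensurated `M ⊆ G ⧸ L`, project onto `H ⧸ p(L)`. The fibres
are `N`-orbits, so each fibre meets `M` or `Mᶜ` in a finite set, and since `N` is finitely
generated only finitely many fibres meet both. Transitivity of `H` makes the fibres all finite or
all infinite, and makes the side met finitely the same for all fibres. With infinite fibres this
confines `M` or `Mᶜ` to finitely many fibres; with finite fibres the image of `M` is commensurated
by `H`, hence finite or cofinite, and so is `M`. -/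

open scoped Pointwise symmDiff
open Set MulAction

section Commensurated

def IsCommensurated (G : Type*) [Group G] {X : Type*} [MulAction G X] (M : Set X) : Prop :=
  ∀ g : G, (M ∆ (g • M)).Finite

def commensurator (G : Type*) [Group G] {X : Type*} [MulAction G X] (M : Set X) :
    Subgroup G where
  carrier := {g : G | (M ∆ (g • M)).Finite}
  one_mem' := by simp
  mul_mem' {a b} ha hb := by
    refine (Set.Finite.union ha (Set.Finite.smul_set (a := a) hb)).subset ?_
    rw [smul_set_symmDiff, smul_smul]
    exact symmDiff_triangle _ _ _
  inv_mem' {a} ha := by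
    simpa [smul_set_symmDiff, symmDiff_comm] using Set.Finite.smul_set (a := a⁻¹) ha

variable {G H X Y : Type*} [Group G] [Group H] [MulAction G X] [MulAction H Y]

lemma mem_commensurator_of_sdiff {M : Set X} {g : G} (h : (g • M \ M).Finite)
    (h' : (g⁻¹ • M \ M).Finite) : g ∈ commensurator G M := by
  have : M \ g • M = g • (g⁻¹ • M \ M) := by rw [smul_set_sdiff, smul_inv_smul]
  show (M ∆ (g • M)).Finite
  rw [Set.symmDiff_def, this]
  exact h'.smul_set.union h

lemma IsCommensurated.of_closure {S : Set G} (hS : Subgroup.closure S = ⊤) {M : Set X}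
    (h : S ⊆ commensurator G M) : IsCommensurated G M := fun g =>
  Subgroup.closure_le _ |>.2 h (hS ▸ Subgroup.mem_top g)

lemma smul_mem_iff_of_notMem_symmDiff {M : Set X} {g : G} {x : X} (h : g • x ∉ M ∆ (g • M)) :
    g • x ∈ M ↔ x ∈ M := by
  rw [Set.mem_symmDiff, smul_mem_smul_set_iff] at h
  tauto

lemma Set.image_symmDiff_subset {α β : Type*} (f : α → β) (s t : Set α) :
    (f '' s) ∆ (f '' t) ⊆ f '' (s ∆ t) := by
  rintro _ (⟨⟨x, hx, rfl⟩, hxt⟩ | ⟨⟨x, hx, rfl⟩, hxs⟩)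
  · exact ⟨x, .inl ⟨hx, fun h => hxt ⟨x, h, rfl⟩⟩, rfl⟩
  · exact ⟨x, .inr ⟨hx, fun h => hxs ⟨x, h, rfl⟩⟩, rfl⟩

lemma IsCommensurated.preimage {σ : G → H} (f : X →ₑ[σ] Y) (hf : Function.Injective f)
    {M : Set Y} (hM : IsCommensurated H M) : IsCommensurated G (f ⁻¹' M) := fun g => by
  rw [← Group.preimage_smul_setₛₗ σ f, ← preimage_symmDiff]
  exact (hM (σ g)).preimage hf.injOn

lemma IsCommensurated.image {σ : G → H} (f : X →ₑ[σ] Y) (hσ : Function.Surjective σ)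
    {M : Set X} (hM : IsCommensurated G M) : IsCommensurated H (f '' M) :=
  hσ.forall.2 fun g => ((hM g).image f).subset <| by
    rw [← image_smul_setₛₗ]
    exact Set.image_symmDiff_subset f _ _

end Commensurated

section Ends

open SimpleGraph

lemma numEnds_le_one_iff {V : Type*} (Γ : SimpleGraph V) :
    numEnds Γ ≤ 1 ↔ ∀ (K : Finset V) (C D : Γ.ComponentCompl K),
      (C : Set V).Infinite → (D : Set V).Infinite → C = D := by
  have hsupp : ∀ (K : Finset V) (C : Γ.ComponentCompl K),
      (C : Set V) = Subtype.val '' ConnectedComponent.supp C := by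
    intro K C
    ext v
    simp [ComponentCompl.mem_supp_iff, ConnectedComponent.mem_supp_iff]
  simp only [numEnds, iSup_le_iff, Set.encard_le_one_iff, Set.mem_ofPred_eq, hsupp,
    Set.infinite_image_iff Subtype.val_injective.injOn]

lemma SimpleGraph.ComponentCompl.mem_iff_mem_of_adj {V : Type*} {Γ : SimpleGraph V}
    {K M : Set V} (h : ∀ x y, x ∉ K → y ∉ K → Γ.Adj x y → (x ∈ M ↔ y ∈ M))
    {C : Γ.ComponentCompl K} {x y : V} (hx : x ∈ C) (hy : y ∈ C) : x ∈ M ↔ y ∈ M := by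
  let side : Γ.ComponentCompl K → Prop :=
    ComponentCompl.lift (fun v _ => v ∈ M) fun v w hv hw hvw => propext (h v w hv hw hvw)
  obtain ⟨hxK, rfl⟩ := hx
  obtain ⟨hyK, hxy⟩ := hy
  show side (Γ.componentComplMk hxK) ↔ y ∈ M
  rw [← hxy]
  rfl

lemma SimpleGraph.exists_componentCompl_infinite_inter {V : Type*} (Γ : SimpleGraph V)
    [Γ.LocallyFinite] [Fact Γ.Preconnected] (K : Finset V) {W : Set V} (hW : W.Infinite) :
    ∃ C : Γ.ComponentCompl K, ((C : Set V) ∩ W).Infinite := by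
  by_contra! h
  refine hW ((K.finite_toSet.union (Set.finite_iUnion h)).subset fun v hv => ?_)
  by_cases hvK : v ∈ (K : Set V)
  · exact .inl hvK
  · exact .inr (Set.mem_iUnion.2 ⟨Γ.componentComplMk hvK, Γ.componentComplMk_mem hvK, hv⟩)

variable {G X : Type*} [Group G] [MulAction G X] {S : Set G}

lemma schreierGraph_eq_orbitalGraph (L : Subgroup G) :
    schreierGraph G S L = orbitalGraph G S (G ⧸ L) := by
  ext x y
  refine and_congr_right fun _ => exists_congr fun s => and_congr_right fun _ => ⟨?_, fun h => ?_⟩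
  · rintro ⟨g, ⟨rfl, rfl⟩ | ⟨rfl, rfl⟩⟩
    exacts [.inl rfl, .inr rfl]
  · induction x using QuotientGroup.induction_on
    induction y using QuotientGroup.induction_on
    rcases h with h | h
    exacts [⟨_, .inl ⟨rfl, h⟩⟩, ⟨_, .inr ⟨rfl, h⟩⟩]

lemma orbitalGraph_adj_smul {s : G} (hs : s ∈ S) {x : X} (h : s • x ≠ x) :
    (orbitalGraph G S X).Adj x (s • x) :=
  ⟨h.symm, s, hs, .inl rfl⟩

lemma orbitalGraph_reachable_smul (hS : Subgroup.closure S = ⊤) (g : G) (x : X) :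
    (orbitalGraph G S X).Reachable x (g • x) := by
  induction (hS ▸ Subgroup.mem_top g : g ∈ Subgroup.closure S) using Subgroup.closure_induction
    generalizing x with
  | mem s hs =>
    by_cases h : s • x = x
    · rw [h]
    · exact (orbitalGraph_adj_smul hs h).reachable
  | one => rw [one_smul]
  | mul a b _ _ ha hb => exact (hb x).trans (mul_smul a b x ▸ ha (b • x))
  | inv a _ ha => simpa using (ha (a⁻¹ • x)).symm

lemma orbitalGraph_preconnected [IsPretransitive G X] (hS : Subgroup.closure S = ⊤) :
    (orbitalGraph G S X).Preconnected := fun x y => by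
  obtain ⟨g, rfl⟩ := exists_smul_eq G x y
  exact orbitalGraph_reachable_smul hS g x

lemma orbitalGraph_neighborSet_finite (hS : S.Finite) (x : X) :
    ((orbitalGraph G S X).neighborSet x).Finite := by
  refine ((hS.image (· • x)).union (hS.image (·⁻¹ • x))).subset ?_
  rintro y ⟨-, s, hs, rfl | rfl⟩
  · exact .inl ⟨s, hs, rfl⟩
  · exact .inr ⟨s, hs, inv_smul_smul s y⟩

lemma one_lt_numEnds_orbitalGraph [IsPretransitive G X] (hSfin : S.Finite)
    (hS : Subgroup.closure S = ⊤) {M : Set X} (hM : IsCommensurated G M) (hMinf : M.Infinite)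
    (hMcinf : Mᶜ.Infinite) : 1 < numEnds (orbitalGraph G S X) := by
  classical
  let Γ := orbitalGraph G S X
  have : Γ.LocallyFinite := fun x => (orbitalGraph_neighborSet_finite hSfin x).fintype
  have : Fact Γ.Preconnected := ⟨orbitalGraph_preconnected hS⟩
  have hD : (⋃ s ∈ S, M ∆ (s • M)).Finite := hSfin.biUnion fun s _ => hM s
  let K := hD.toFinset
  -- Outside `K` no edge joins `M` to `Mᶜ`, so each component lies on one side.
  have side : ∀ x y, x ∉ (K : Set X) → y ∉ (K : Set X) → Γ.Adj x y → (x ∈ M ↔ y ∈ M) := by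
    rintro x y hx hy ⟨-, s, hs, rfl | rfl⟩
    · rw [Set.Finite.coe_toFinset, Set.mem_iUnion₂, not_exists] at hy
      exact (smul_mem_iff_of_notMem_symmDiff fun h => hy s ⟨hs, h⟩).symm
    · rw [Set.Finite.coe_toFinset, Set.mem_iUnion₂, not_exists] at hx
      exact smul_mem_iff_of_notMem_symmDiff fun h => hx s ⟨hs, h⟩
  obtain ⟨C, hC⟩ := Γ.exists_componentCompl_infinite_inter K hMinf
  obtain ⟨D, hD⟩ := Γ.exists_componentCompl_infinite_inter K hMcinf
  rw [← not_le, numEnds_le_one_iff]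
  intro h
  obtain rfl := h K C D (hC.mono inter_subset_left) (hD.mono inter_subset_left)
  obtain ⟨x, hxC, hxM⟩ := hC.nonempty
  obtain ⟨y, hyC, hyM⟩ := hD.nonempty
  exact hyM ((ComponentCompl.mem_iff_mem_of_adj side hxC hyC).1 hxM)

lemma exists_isCommensurated_of_one_lt_numEnds (hS : Subgroup.closure S = ⊤)
    (h : 1 < numEnds (orbitalGraph G S X)) :
    ∃ M : Set X, IsCommensurated G M ∧ M.Infinite ∧ Mᶜ.Infinite := by
  let Γ := orbitalGraph G S X
  rw [← not_le, numEnds_le_one_iff] at h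
  push Not at h
  obtain ⟨K, C, D, hC, hD, hCD⟩ := h
  refine ⟨C, IsCommensurated.of_closure hS fun s hs => ?_, hC,
    hD.mono (ComponentCompl.pairwise_disjoint hCD.symm).subset_compl_right⟩
  have hmove : ∀ g : G, (∀ x : X, g • x = x ∨ Γ.Adj x (g • x)) → (g • (C : Set X) \ C).Finite := by
    refine fun g hg => K.finite_toSet.subset ?_
    rintro _ ⟨⟨x, hx, rfl⟩, hgx⟩
    change g • x ∉ (C : Set X) at hgx
    by_contra hK
    rcases hg x with h | h
    · rw [h] at hgx
      exact hgx hx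
    · exact hgx (ComponentCompl.mem_of_adj x _ hx hK h)
  refine mem_commensurator_of_sdiff (hmove s fun x => ?_) (hmove s⁻¹ fun x => ?_)
  · exact (em _).imp_right (orbitalGraph_adj_smul hs)
  · refine (em _).imp_right fun h => ?_
    simpa using (orbitalGraph_adj_smul hs (x := s⁻¹ • x) (by simpa [eq_comm] using h)).symm

end Ends

section FW

variable {G X : Type*} [Group G] [MulAction G X]

lemma exists_isSymmGen (hG : Group.FG G) : ∃ S : Finset G, IsSymmGen S := by
  classical
  obtain ⟨S, hS⟩ := Group.fg_def.1 hG
  refine ⟨S ∪ S⁻¹, fun s hs => ?_, eq_top_iff.2 (hS ▸ Subgroup.closure_mono ?_)⟩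
  · rcases Finset.mem_union.1 hs with h | h
    · exact Finset.mem_union_right _ (Finset.inv_mem_inv h)
    · exact Finset.mem_union_left _ (by simpa using h)
  · simp

lemma HasFW.finite_or_finite_compl (hG : HasFW G) (hfg : Group.FG G) {L : Subgroup G}
    {M : Set (G ⧸ L)} (hM : IsCommensurated G M) : M.Finite ∨ Mᶜ.Finite := by
  obtain ⟨S, hS⟩ := exists_isSymmGen hfg
  by_contra! h
  have hends := hG S hS L
  rw [schreierGraph_eq_orbitalGraph] at hends
  exact hends.not_gt (one_lt_numEnds_orbitalGraph S.finite_toSet hS.2 hM h.1 h.2)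

lemma HasFW.finite_or_finite_inter_orbit (hG : HasFW G) (hfg : Group.FG G) {M : Set X}
    (hM : IsCommensurated G M) (x : X) :
    (M ∩ orbit G x).Finite ∨ (Mᶜ ∩ orbit G x).Finite := by
  let f : G ⧸ stabilizer G x →[G] X := ⟨ofQuotientStabilizer G x, ofQuotientStabilizer_smul G x⟩
  have hf : Function.Injective f := injective_ofQuotientStabilizer G x
  have hrange : range f = orbit G x := by
    ext y
    simp only [mem_range, mem_orbit_iff, (QuotientGroup.mk_surjective).exists]
    rfl
  have himage : ∀ A : Set X, f '' (f ⁻¹' A) = A ∩ orbit G x := fun A => by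
    rw [image_preimage_eq_inter_range, hrange]
  rw [← himage, ← himage]
  exact ((hG.finite_or_finite_compl hfg (hM.preimage f hf)).imp (·.image f) (·.image f))

lemma hasFW_of_forall_finite_or_finite_compl
    (h : ∀ (L : Subgroup G) (M : Set (G ⧸ L)), IsCommensurated G M → M.Finite ∨ Mᶜ.Finite) :
    HasFW G := by
  intro S hS L
  rw [schreierGraph_eq_orbitalGraph]
  by_contra! hends
  obtain ⟨M, hM, hMinf, hMcinf⟩ := exists_isCommensurated_of_one_lt_numEnds hS.2 hends
  exact (h L M hM).elim hMinf hMcinf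

end FW

section Extension

variable {N G H : Type*} [Group N] [Group G] [Group H]

theorem Group.fg_of_exact (ι : N →* G) (p : G →* H) (hp : Function.Surjective p)
    (hexact : ι.range = p.ker) (hN : Group.FG N) (hH : Group.FG H) : Group.FG G := by
  classical
  obtain ⟨SN, hSN⟩ := Group.fg_def.1 hN
  obtain ⟨SH, hSH⟩ := Group.fg_def.1 hH
  refine Group.fg_def.2 ⟨SN.image ι ∪ SH.image (Function.surjInv hp), ?_⟩
  set K := Subgroup.closure (↑(SN.image ι ∪ SH.image (Function.surjInv hp)) : Set G)
  have hker : p.ker ≤ K := by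
    rw [← hexact, MonoidHom.range_eq_map, ← hSN, MonoidHom.map_closure]
    exact Subgroup.closure_mono (by simp)
  have hmap : K.map p = ⊤ := by
    rw [MonoidHom.map_closure, eq_top_iff, ← hSH]
    refine Subgroup.closure_mono fun h hh => ⟨Function.surjInv hp h, ?_, Function.surjInv_eq hp h⟩
    exact Finset.mem_coe.2 (Finset.mem_union_right _ (Finset.mem_image_of_mem _ hh))
  rw [← Subgroup.comap_map_eq_self hker, hmap, Subgroup.comap_top]

def cosetMap (p : G →* H) (L : Subgroup G) : G ⧸ L →ₑ[p] H ⧸ L.map p where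
  toFun := Quotient.map' p fun a b h => by
    rw [QuotientGroup.leftRel_apply] at h ⊢
    rw [← map_inv, ← map_mul]
    exact Subgroup.mem_map_of_mem p h
  map_smul' g x := by
    induction x using QuotientGroup.induction_on with | H a => ?_
    change ((p (g * a) : H) : H ⧸ L.map p) = p g • ((p a : H) : H ⧸ L.map p)
    rw [map_mul]
    rfl

lemma cosetMap_mk (p : G →* H) (L : Subgroup G) (g : G) : cosetMap p L g = (p g : H ⧸ L.map p) :=
  rfl

lemma cosetMap_eq_iff {ι : N →* G} {p : G →* H} (hexact : ι.range = p.ker) {L : Subgroup G}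
    {x y : G ⧸ L} : cosetMap p L x = cosetMap p L y ↔ ∃ n, ι n • x = y := by
  constructor
  · induction x using QuotientGroup.induction_on with | H a => ?_
    induction y using QuotientGroup.induction_on with | H b => ?_
    rw [cosetMap_mk, cosetMap_mk, QuotientGroup.eq]
    rintro ⟨l, hl, hpl⟩
    have hk : b * l⁻¹ * a⁻¹ ∈ ι.range := by
      rw [hexact, MonoidHom.mem_ker, map_mul, map_mul, map_inv, map_inv, hpl]
      group
    obtain ⟨n, hn⟩ := hk
    refine ⟨n, QuotientGroup.eq.2 ?_⟩
    have : (b * l⁻¹ * a⁻¹ * a)⁻¹ * b = l := by group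
    change (ι n * a)⁻¹ * b ∈ L
    rwa [hn, this]
  · rintro ⟨n, rfl⟩
    rw [map_smulₛₗ, MonoidHom.mem_ker.1 (hexact ▸ MonoidHom.mem_range.2 ⟨n, rfl⟩), one_smul]

end Extension

section Fibration

lemma finite_of_finite_image_of_fibers {α β : Type*} {f : α → β} {A : Set α}
    (h : (f '' A).Finite) (hfib : ∀ y, (f ⁻¹' {y} ∩ A).Finite) : A.Finite :=
  (h.biUnion fun y _ => hfib y).subset fun x hx => mem_biUnion ⟨x, hx, rfl⟩ ⟨rfl, hx⟩

lemma finite_or_finite_compl_of_finite_fibers {α β : Type*} {f : α → β} {M : Set α}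
    (hfib : ∀ y, (f ⁻¹' {y}).Finite) (hB : (f '' M ∩ f '' Mᶜ).Finite)
    (himage : (f '' M).Finite ∨ (f '' M)ᶜ.Finite) : M.Finite ∨ Mᶜ.Finite := by
  have key : ∀ A : Set α, (f '' A).Finite → A.Finite := fun A hA =>
    finite_of_finite_image_of_fibers hA fun y => (hfib y).subset inter_subset_left
  refine himage.imp (key M) fun h => key _ ((h.union hB).subset fun y hy => ?_)
  by_cases hyM : y ∈ f '' M
  exacts [.inr ⟨hyM, hy⟩, .inl hyM]

lemma finite_of_infinite_fibers {α β : Type*} {f : α → β} {A : Set α}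
    (hfib : ∀ y, (f ⁻¹' {y}).Infinite) (hA : ∀ y, (f ⁻¹' {y} ∩ A).Finite)
    (hB : (f '' A ∩ f '' Aᶜ).Finite) : A.Finite := by
  refine finite_of_finite_image_of_fibers (hB.subset fun y hy => ⟨hy, ?_⟩) hA
  obtain ⟨x, hxy, hxA⟩ := ((hfib y).sdiff (hA y)).nonempty
  exact ⟨x, fun h => hxA ⟨hxy, h⟩, hxy⟩

lemma MulAction.IsPretransitive.forall_or_forall_not {H Q : Type*} [Group H] [MulAction H Q]
    [IsPretransitive H Q] {P : Q → Prop} (hP : ∀ (h : H) (y : Q), P y → P (h • y)) :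
    (∀ y, P y) ∨ ∀ y, ¬P y := by
  by_contra! h
  obtain ⟨⟨y, hy⟩, z, hz⟩ := h
  obtain ⟨g, rfl⟩ := MulAction.exists_smul_eq H z y
  exact hy (hP g z hz)

lemma smul_mem_iff_of_closure_eq_top {G X : Type*} [Group G] [MulAction G X] {T : Set G}
    (hT : Subgroup.closure T = ⊤) {M : Set X} {x : X}
    (h : ∀ t ∈ T, ∀ z ∈ orbit G x, t • z ∈ M ↔ z ∈ M) (g : G) : g • x ∈ M ↔ x ∈ M := by
  have horbit : ∀ (g : G) (z : X), g • z ∈ orbit G x ↔ z ∈ orbit G x := fun g z => by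
    rw [← orbit_eq_iff, orbit_smul, orbit_eq_iff]
  have hstab : T ⊆ stabilizer G (M ∩ orbit G x) := fun t ht => mem_stabilizer_set.2 fun z => by
    by_cases hz : z ∈ orbit G x
    · simp only [mem_inter_iff, h t ht z hz, hz, horbit]
    · simp only [mem_inter_iff, hz, horbit, and_false]
  have hg : g ∈ stabilizer G (M ∩ orbit G x) :=
    Subgroup.closure_le _ |>.2 hstab (hT ▸ Subgroup.mem_top g)
  simpa [horbit, mem_orbit_self] using mem_stabilizer_set.1 hg x

variable {N G H X Q : Type*} [Group N] [Group G] [Group H] [MulAction G X] {M : Set X}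

section Equivariant

variable [MulAction H Q] {p : G →* H} (π : X →ₑ[p] Q)

lemma preimage_singleton_smul (g : G) (y : Q) : π ⁻¹' {p g • y} = g • π ⁻¹' {y} := by
  rw [← smul_set_singleton, Group.preimage_smul_setₛₗ]

lemma IsCommensurated.finite_inter_preimage_smul (hM : IsCommensurated G M) (g : G) {y : Q}
    (h : (π ⁻¹' {y} ∩ M).Finite) : (π ⁻¹' {p g • y} ∩ M).Finite := by
  have : π ⁻¹' {p g • y} ∩ M = g • (π ⁻¹' {y} ∩ g⁻¹ • M) := by
    rw [preimage_singleton_smul, smul_set_inter, smul_inv_smul]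
  rw [this]
  refine Set.Finite.smul_set ((h.union (hM g⁻¹)).subset ?_)
  rintro x ⟨hxy, hxM⟩
  by_cases hx : x ∈ M
  exacts [.inl ⟨hxy, hx⟩, .inr (.inr ⟨hxM, hx⟩)]

end Equivariant

section OrbitFibres

variable {ι : N →* G} {f : X → Q} (hf : ∀ x x', f x = f x' ↔ ∃ n, ι n • x = x')
include hf

lemma HasFW.finite_or_finite_inter_preimage (hN : HasFW N) (hNfg : Group.FG N)
    (hM : IsCommensurated G M) (y : Q) :
    (f ⁻¹' {y} ∩ M).Finite ∨ (f ⁻¹' {y} ∩ Mᶜ).Finite := by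
  rcases eq_empty_or_nonempty (f ⁻¹' {y}) with h | ⟨x, rfl⟩
  · simp [h]
  let : MulAction N X := compHom X ι
  have horbit : f ⁻¹' {f x} = orbit N x := by
    ext x'
    rw [mem_preimage, mem_singleton_iff, eq_comm, hf, mem_orbit_iff]
    rfl
  rw [horbit, inter_comm, inter_comm _ Mᶜ]
  exact hN.finite_or_finite_inter_orbit hNfg (fun n => hM (ι n)) x

lemma IsCommensurated.finite_image_inter_image_compl (hNfg : Group.FG N)
    (hM : IsCommensurated G M) : (f '' M ∩ f '' Mᶜ).Finite := by
  obtain ⟨T, hT, hTfin⟩ := Group.fg_iff.1 hNfg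
  let : MulAction N X := compHom X ι
  refine ((hTfin.biUnion fun t _ => hM (ι t)).image f).subset ?_
  rintro _ ⟨⟨x, hx, rfl⟩, x', hx', hxx'⟩
  obtain ⟨n, rfl⟩ := (hf x x').1 hxx'.symm
  -- The fibre of `f x` is an `N`-orbit meeting both `M` and `Mᶜ`, so a generator crosses.
  have hcross : ¬ ∀ t ∈ T, ∀ z ∈ orbit N x, t • z ∈ M ↔ z ∈ M := fun h =>
    hx' ((smul_mem_iff_of_closure_eq_top hT h n).2 hx)
  push Not at hcross
  obtain ⟨t, ht, _, ⟨m, rfl⟩, hz⟩ := hcross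
  refine ⟨t • m • x, mem_biUnion ht ?_, ((hf _ _).2 ⟨t * m, ?_⟩).symm⟩
  · change ι t • m • x ∈ M ∆ (ι t • M)
    rw [mem_symmDiff, smul_mem_smul_set_iff]
    beta_reduce at hz
    tauto
  · rw [map_mul, mul_smul]
    rfl

end OrbitFibres

lemma HasFW.finite_or_finite_compl_of_exact {ι : N →* G} {p : G →* H} {L : Subgroup H}
    (π : X →ₑ[p] H ⧸ L) (hπ : ∀ x x', π x = π x' ↔ ∃ n, ι n • x = x')
    (hp : Function.Surjective p) (hNfg : Group.FG N) (hN : HasFW N) (hHfg : Group.FG H)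
    (hH : HasFW H) (hM : IsCommensurated G M) : M.Finite ∨ Mᶜ.Finite := by
  have hfibers : (∀ y, (π ⁻¹' {y}).Finite) ∨ ∀ y, (π ⁻¹' {y}).Infinite :=
    IsPretransitive.forall_or_forall_not <| hp.forall.2 fun g y h => by
      rw [preimage_singleton_smul]
      exact h.smul_set
  have hMfib : (∀ y, (π ⁻¹' {y} ∩ M).Finite) ∨ ∀ y, (π ⁻¹' {y} ∩ Mᶜ).Finite :=
    (IsPretransitive.forall_or_forall_not <| hp.forall.2 fun g y =>
      hM.finite_inter_preimage_smul π g).imp_right fun h y =>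
        (hN.finite_or_finite_inter_preimage hπ hNfg hM y).resolve_left (h y)
  have hB := hM.finite_image_inter_image_compl hπ hNfg
  rcases hfibers with hfin | hinf
  · exact finite_or_finite_compl_of_finite_fibers hfin hB
      (hH.finite_or_finite_compl hHfg (hM.image π hp))
  rcases hMfib with h | h
  · exact .inl (finite_of_infinite_fibers hinf h hB)
  · exact .inr (finite_of_infinite_fibers hinf h (by rwa [compl_compl, inter_comm]))

end Fibration

theorem HasFW.of_exact {N G H : Type*} [Group N] [Group G] [Group H] (ι : N →* G) (p : G →* H)
    (hp : Function.Surjective p) (hexact : ι.range = p.ker) (hNfg : Group.FG N) (hN : HasFW N)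
    (hHfg : Group.FG H) (hH : HasFW H) : HasFW G :=
  hasFW_of_forall_finite_or_finite_compl fun L _ hM =>
    HasFW.finite_or_finite_compl_of_exact (cosetMap p L) (fun _ _ => cosetMap_eq_iff hexact) hp
      hNfg hN hHfg hH hM

/-- A semidirect product of finitely generated groups with property FW is finitely
generated and has property FW. -/
theorem stmt15 {N H : Type*} [Group N] [Group H] (φ : H →* MulAut N)
    (hNfg : Group.FG N) (hHfg : Group.FG H) (hN : HasFW N) (hH : HasFW H) :
    Group.FG (N ⋊[φ] H) ∧ HasFW (N ⋊[φ] H) := by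
  have hexact := SemidirectProduct.range_inl_eq_ker_rightHom (φ := φ)
  exact ⟨Group.fg_of_exact _ _ SemidirectProduct.rightHom_surjective hexact hNfg hHfg,
    HasFW.of_exact _ _ SemidirectProduct.rightHom_surjective hexact hNfg hN hHfg hH⟩
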